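/- Let d be a positive integer. In the unit group (ℤ[X]/(X^{d+1}))^× one has the relation ∏_{i=0}^{d+1} (1 - iX)^{(-1)^i · binom(d+1, i)} = 1, where the exponents are integers and negative powers are taken in the unit group. -/

import Mathlib

/-- The truncated polynomial ring `ℤ[X]/(X^(d+1))`. -/
def TruncPoly (d : ℕ) : Type :=
  Polynomial ℤ ⧸ Ideal.span ({Polynomial.X ^ (d + 1)} : Set (Polynomial ℤ))

noncomputable instance (d : ℕ) : CommRing (TruncPoly d) :=
  Ideal.Quotient.commRing _

/-- The residue class of `1 - i·X` in `ℤ[X]/(X^(d+1))`. -/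
noncomputable def oneSubMulX (d i : ℕ) : TruncPoly d :=
  Ideal.Quotient.mk (Ideal.span ({Polynomial.X ^ (d + 1)} : Set (Polynomial ℤ)))
    (1 - (i : Polynomial ℤ) * Polynomial.X)

/-!
Let `x` be the class of `X` in `A = R[X]/(X^n)` and view `f j = 1 - j x` in the additive
group of `Aˣ`, so that the product is `(-1)^n • Δ^n f 0`. The substitution
`ψ : x ↦ x / (1 - x)` sends `1 - j x` to `(1 - (j + 1) x) / (1 - x)`, i.e.
`f (j + 1) = ψ (f j) + f 1`; for `k ≥ 1` the constant `f 1` is killed by `Δ^k`, so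
`Δ^(k+1) f = ψ ∘ Δ^k f - Δ^k f`. Since `ψ` is the identity modulo `x` and `ψ x = x w` with
`w ≡ 1 mod x`, `ψ u ≡ u mod x^(k+1)` whenever `u ≡ 1 mod x^k`. By induction
`Δ^k f ≡ 1 mod x^k`, and `x^n = 0`.
-/

open Finset Function Polynomial AdjoinRoot fwdDiff

section FwdDiff

variable {M G G' : Type*} [AddCommMonoid M] [AddCommGroup G] [AddCommGroup G'] (h : M)

theorem fwdDiff_iter_comp_addMonoidHom (φ : G →+ G') (f : M → G) (n : ℕ) :
    Δ_[h] ^[n] (φ ∘ f) = φ ∘ Δ_[h] ^[n] f := by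
  ext y
  simp [fwdDiff_iter_eq_sum_shift, map_sum, map_zsmul]

theorem fwdDiff_iter_const_eq_zero (c : G) {n : ℕ} (hn : n ≠ 0) :
    Δ_[h] ^[n] (fun _ : M ↦ c) = 0 := by
  obtain ⟨k, rfl⟩ := Nat.exists_eq_succ_of_ne_zero hn
  rw [iterate_succ_apply, fwdDiff_const]
  exact iterate_fixed (fwdDiff_const h 0) k

theorem sum_neg_one_pow_mul_choose_smul_eq_fwdDiff_iter (f : M → G) (n : ℕ) (y : M) :
    ∑ k ∈ range (n + 1), ((-1 : ℤ) ^ k * n.choose k) • f (y + k • h) =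
      (-1 : ℤ) ^ n • Δ_[h] ^[n] f y := by
  rw [fwdDiff_iter_eq_sum_shift, smul_sum]
  refine sum_congr rfl fun k hk ↦ ?_
  have hkn : n + (n - k) = k + 2 * (n - k) := by grind
  rw [smul_smul, ← mul_assoc, ← pow_add, hkn, pow_add, pow_mul, neg_one_sq, one_pow, mul_one]

theorem fwdDiff_iter_apply_succ_of_shift {f : ℕ → G} (Ψ : G →+ G) (c : G)
    (hf : ∀ j, f (j + 1) = Ψ (f j) + c) {n : ℕ} (hn : n ≠ 0) (j : ℕ) :
    Δ_[1] ^[n] f (j + 1) = Ψ (Δ_[1] ^[n] f j) := by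
  have hshift : (fun r ↦ f (r + 1)) = Ψ ∘ f + fun _ ↦ c := funext hf
  rw [← fwdDiff_iter_comp_add, hshift, fwdDiff_iter_add, fwdDiff_iter_const_eq_zero _ _ hn,
    add_zero, fwdDiff_iter_comp_addMonoidHom]
  rfl

end FwdDiff

theorem Units.val_div_sub_one {A : Type*} [CommRing A] (V U : Aˣ) :
    ((V / U : Aˣ) : A) - 1 = (V - U) * ↑U⁻¹ := by
  rw [div_eq_mul_inv, Units.val_mul, sub_mul, Units.mul_inv]

namespace AdjoinRoot

variable {R : Type*} [CommRing R] (n : ℕ)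

theorem root_X_pow_pow : root (X ^ n : R[X]) ^ n = 0 := by
  rw [← mk_X, ← map_pow, mk_self]

theorem isNilpotent_root_X_pow : IsNilpotent (root (X ^ n : R[X])) :=
  ⟨n, root_X_pow_pow n⟩

noncomputable def divOneSubSubst : AdjoinRoot (X ^ n : R[X]) →+* AdjoinRoot (X ^ n : R[X]) :=
  lift (of _) (root (X ^ n : R[X]) *
      ↑(isNilpotent_root_X_pow (R := R) n).isUnit_one_sub.unit⁻¹)
    (by simp [mul_pow, root_X_pow_pow])

theorem divOneSubSubst_root_mul :
    divOneSubSubst n (root (X ^ n : R[X])) * (1 - root (X ^ n : R[X])) = root (X ^ n : R[X]) := by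
  rw [divOneSubSubst, lift_root, mul_assoc, IsUnit.val_inv_mul, mul_one]

theorem divOneSubSubst_one_sub_mul (j : ℕ) :
    divOneSubSubst n (1 - (j : AdjoinRoot (X ^ n : R[X])) * root (X ^ n : R[X])) *
        (1 - root (X ^ n : R[X])) =
      1 - (j + 1 : AdjoinRoot (X ^ n : R[X])) * root (X ^ n : R[X]) := by
  rw [map_sub, map_one, map_mul, map_natCast]
  linear_combination (-(j : AdjoinRoot (X ^ n : R[X]))) * divOneSubSubst_root_mul (R := R) n

theorem root_dvd_divOneSubSubst_sub (q : AdjoinRoot (X ^ n : R[X])) :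
    root (X ^ n : R[X]) ∣ divOneSubSubst n q - q := by
  let π := Ideal.Quotient.mk (Ideal.span {root (X ^ n : R[X])})
  have hπ : π.comp (divOneSubSubst n) = π := by
    refine ringHom_ext ?_ ?_
    · rw [RingHom.comp_assoc, divOneSubSubst, lift_comp_of]
    · simp [π, divOneSubSubst]
  rw [← Ideal.mem_span_singleton, ← Ideal.Quotient.eq]
  exact RingHom.congr_fun hπ q

theorem pow_succ_dvd_divOneSubSubst_sub {k : ℕ} {a : AdjoinRoot (X ^ n : R[X])}
    (ha : root (X ^ n : R[X]) ^ k ∣ a - 1) :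
    root (X ^ n : R[X]) ^ (k + 1) ∣ divOneSubSubst n a - a := by
  have hmul := divOneSubSubst_root_mul (R := R) n
  set x := root (X ^ n : R[X])
  set ψ := divOneSubSubst (R := R) n
  obtain ⟨q, hq⟩ := ha
  obtain ⟨w, hψx, hw⟩ : ∃ w, ψ x = x * w ∧ x ∣ w - 1 :=
    ⟨1 + ψ x, by linear_combination hmul, ⟨1 + ψ x, by linear_combination hmul⟩⟩
  have hψa : ψ a - a = x ^ k * (w ^ k * (ψ q - q) + (w ^ k - 1) * q) := by
    rw [show a = 1 + x ^ k * q by linear_combination hq, map_add, map_one, map_mul, map_pow, hψx]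
    ring
  rw [hψa, pow_succ]
  exact mul_dvd_mul_left _ (dvd_add (dvd_mul_of_dvd_right (root_dvd_divOneSubSubst_sub n q) _)
    (dvd_mul_of_dvd_left (hw.trans (sub_one_dvd_pow_sub_one w k)) _))

variable {n} {u : ℕ → (AdjoinRoot (X ^ n : R[X]))ˣ}

theorem units_succ_eq_map_divOneSubSubst_mul
    (hu : ∀ i, (u i : AdjoinRoot (X ^ n : R[X])) = 1 - i * root (X ^ n : R[X])) (j : ℕ) :
    u (j + 1) = Units.map (divOneSubSubst (R := R) n).toMonoidHom (u j) * u 1 := by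
  ext
  rw [Units.val_mul, Units.coe_map, RingHom.toMonoidHom_eq_coe, MonoidHom.coe_coe, hu, hu, hu,
    Nat.cast_one, one_mul, divOneSubSubst_one_sub_mul, Nat.cast_succ]

theorem root_pow_dvd_fwdDiff_iter_sub_one
    (hu : ∀ i, (u i : AdjoinRoot (X ^ n : R[X])) = 1 - i * root (X ^ n : R[X])) (k j : ℕ) :
    root (X ^ n : R[X]) ^ k ∣
      ((Δ_[1] ^[k] (fun i ↦ Additive.ofMul (u i)) j).toMul : AdjoinRoot (X ^ n : R[X])) - 1 := by
  induction k generalizing j with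
  | zero => simp
  | succ k ih =>
    rw [iterate_succ_apply', fwdDiff, toMul_sub, Units.val_div_sub_one]
    rcases Nat.eq_zero_or_pos k with rfl | hk
    · refine Dvd.dvd.mul_right ⟨-1, ?_⟩ _
      rw [iterate_zero, id_eq, toMul_ofMul, toMul_ofMul, hu, hu]
      push_cast
      ring
    · have hshift (j : ℕ) : Additive.ofMul (u (j + 1)) =
          (Units.map (divOneSubSubst (R := R) n).toMonoidHom).toAdditive (Additive.ofMul (u j)) +
            Additive.ofMul (u 1) :=
        congrArg Additive.ofMul (units_succ_eq_map_divOneSubSubst_mul hu j)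
      rw [fwdDiff_iter_apply_succ_of_shift (f := fun i ↦ Additive.ofMul (u i)) _ _ hshift hk.ne']
      exact (pow_succ_dvd_divOneSubSubst_sub n (ih j)).mul_right _

theorem prod_units_zpow_neg_one_pow_mul_choose_eq_one
    (hu : ∀ i, (u i : AdjoinRoot (X ^ n : R[X])) = 1 - i * root (X ^ n : R[X])) :
    ∏ i ∈ range (n + 1), u i ^ ((-1 : ℤ) ^ i * (n.choose i : ℤ)) = 1 := by
  have hΔ : Δ_[1] ^[n] (fun i ↦ Additive.ofMul (u i)) 0 = 0 := by
    have h := root_pow_dvd_fwdDiff_iter_sub_one hu n 0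
    rwa [root_X_pow_pow, zero_dvd_iff, sub_eq_zero, Units.val_eq_one, toMul_eq_one] at h
  calc ∏ i ∈ range (n + 1), u i ^ ((-1 : ℤ) ^ i * (n.choose i : ℤ))
      = (∑ i ∈ range (n + 1),
          ((-1 : ℤ) ^ i * n.choose i) • Additive.ofMul (u (0 + i • 1))).toMul := by
        simp [toMul_sum, toMul_zsmul]
    _ = 1 := by
        rw [sum_neg_one_pow_mul_choose_smul_eq_fwdDiff_iter 1 (fun i ↦ Additive.ofMul (u i)), hΔ,
          smul_zero, toMul_zero]

end AdjoinRoot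

theorem koszul_chern_relation_general (d : ℕ)
    (u : ℕ → (TruncPoly d)ˣ)
    (hu : ∀ i, (u i : TruncPoly d) = oneSubMulX d i) :
    ∏ i ∈ Finset.range (d + 2), u i ^ ((-1 : ℤ) ^ i * ((d + 1).choose i : ℤ)) = 1 :=
  -- `TruncPoly d` unfolds to `AdjoinRoot (X ^ (d + 1) : ℤ[X])`.
  AdjoinRoot.prod_units_zpow_neg_one_pow_mul_choose_eq_one (R := ℤ) (n := d + 1) (u := u)
    fun i ↦ (hu i).trans (by simp [oneSubMulX, ← mk_X]; rfl)

/-- The Koszul relation on Chern polynomials: in `(ℤ[X]/(X^(d+1)))ˣ` one has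
`∏_{i=0}^{d+1} (1 - iX)^{(-1)^i · binom(d+1, i)} = 1`. -/
theorem koszul_chern_relation (d : ℕ) (hd : 0 < d)
    (u : ℕ → (TruncPoly d)ˣ)
    (hu : ∀ i, (u i : TruncPoly d) = oneSubMulX d i) :
    ∏ i ∈ Finset.range (d + 2), u i ^ ((-1 : ℤ) ^ i * ((d + 1).choose i : ℤ)) = 1 :=
  koszul_chern_relation_general d u hu
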